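/- Let Γ be a bipartite distance-regular graph with diameter D ≥ 4, valency k ≥ 3, and eigenvalues k = θ_0 > θ_1 > ⋯ > θ_D. Let θ be one of θ_1, θ_2, …, θ_{D-1} and let θ_0*, θ_1*, …, θ_D* denote the corresponding dual eigenvalue sequence. Then θ_0* ≠ θ_2*, and p_i(θ) = (b_2 b_3 ⋯ b_{i+1})/(c_1 c_2 ⋯ c_i) · (θ_i* − θ_{i+2}*)/(θ_0* − θ_2*) for 0 ≤ i ≤ D-2. -/

import Mathlib

open Polynomial Finset Matrix

noncomputable section

attribute [local instance] Classical.propDecidable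

/-- A bipartite distance-regular graph with diameter `D ≥ 4` and valency `k ≥ 3`:
a finite connected simple graph such that for all `h,i,j ≤ D` and all vertices `x,y`
at distance `h`, the number of vertices `z` with `∂(x,z) = i` and `∂(z,y) = j`
is the constant `p h i j`, and `p h i j = 0` whenever `h + i + j` is odd. -/
structure BDRG (α : Type) [Fintype α] [DecidableEq α] where
  G : SimpleGraph α
  hconn : G.Connected
  D : ℕ
  hD : 4 ≤ D
  hdist : ∀ x y : α, G.dist x y ≤ D
  hdiam : ∃ x y : α, G.dist x y = D
  p : ℕ → ℕ → ℕ → ℕ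
  hp : ∀ h i j : ℕ, h ≤ D → i ≤ D → j ≤ D → ∀ x y : α, G.dist x y = h →
      Nat.card {z : α // G.dist x z = i ∧ G.dist z y = j} = p h i j
  hbip : ∀ h i j : ℕ, h ≤ D → i ≤ D → j ≤ D → Odd (h + i + j) → p h i j = 0
  hk : 3 ≤ p 0 1 1

namespace BDRG

variable {α : Type} [Fintype α] [DecidableEq α] (Γ : BDRG α)

/-- The intersection number `c_i = p^i_{1,i-1}` (with `c_0 = 0`), as a real number. -/
def c (i : ℕ) : ℝ := if i = 0 then 0 else (Γ.p i 1 (i - 1) : ℝ)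

/-- The intersection number `b_i = p^i_{1,i+1}` (with `b_D = 0`), as a real number. -/
def b (i : ℕ) : ℝ := if i = Γ.D then 0 else (Γ.p i 1 (i + 1) : ℝ)

/-- The valency `k = b_0`. -/
def k : ℝ := Γ.b 0

/-- The `i`-th valency `k_i = p^0_{ii}`, as a real number. -/
def kv (i : ℕ) : ℝ := (Γ.p 0 i i : ℝ)

/-- The polynomials `f_i` defined by `f_0 = 1`, `f_1 = λ` and
`λ f_i = b_{i-1} f_{i-1} + c_{i+1} f_{i+1}`. -/
def f : ℕ → Polynomial ℝ
  | 0 => 1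
  | 1 => Polynomial.X
  | (i + 2) => Polynomial.C (Γ.c (i + 2))⁻¹ *
      (Polynomial.X * f (i + 1) - Polynomial.C (Γ.b i) * f i)

/-- The polynomials `p_i = Σ_{h ≤ i, i-h even} f_h`. -/
def pp (i : ℕ) : Polynomial ℝ :=
  ∑ h ∈ Finset.range (i + 1), if (i - h) % 2 = 0 then Γ.f h else 0

/-- The `i`-th distance matrix of `Γ`, over `ℂ`. -/
def Amat (i : ℕ) : Matrix α α ℂ :=
  Matrix.of fun y z => if Γ.G.dist y z = i then 1 else 0

/-- The all-ones matrix. -/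
def Jmat (α : Type) [Fintype α] : Matrix α α ℂ := Matrix.of fun _ _ => (1 : ℂ)

/-- `θ 0 > θ 1 > ⋯ > θ D` are the distinct eigenvalues of the adjacency matrix,
with `θ 0 = k`. -/
def IsEigenvalueSeq (θ : ℕ → ℝ) : Prop :=
  θ 0 = Γ.k ∧
  (∀ i j : ℕ, i < j → j ≤ Γ.D → θ j < θ i) ∧
  (∀ i ≤ Γ.D, Module.End.HasEigenvalue (Matrix.mulVecLin (Γ.Amat 1)) ((θ i : ℂ))) ∧
  (∀ μ : ℂ, Module.End.HasEigenvalue (Matrix.mulVecLin (Γ.Amat 1)) μ →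
    ∃ i ≤ Γ.D, μ = ((θ i : ℝ) : ℂ))

/-- The multiplicity of the eigenvalue `t`: the dimension of the corresponding
eigenspace of the adjacency matrix. -/
def m (t : ℝ) : ℕ :=
  Module.finrank ℂ (Module.End.eigenspace (Matrix.mulVecLin (Γ.Amat 1)) (t : ℂ))

/-- `E` is the primitive idempotent for the eigenvalue `t`: the orthogonal projection
onto the `t`-eigenspace of the adjacency matrix. -/
def IsPrimitiveIdempotent (t : ℝ) (E : Matrix α α ℂ) : Prop :=
  Eᴴ = E ∧ E * E = E ∧
  ∀ v : α → ℂ, (Γ.Amat 1).mulVec v = (t : ℂ) • v ↔ E.mulVec v = v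

/-- `θs` is the dual eigenvalue sequence of the matrix `E`, i.e.
`E = |X|⁻¹ Σ_{i=0}^{D} θs i • A_i`. -/
def IsDualEigSeq (E : Matrix α α ℂ) (θs : ℕ → ℝ) : Prop :=
  E = (Fintype.card α : ℂ)⁻¹ • ∑ i ∈ Finset.range (Γ.D + 1), ((θs i : ℝ) : ℂ) • Γ.Amat i

/-- The two-variable polynomial `Ψ_i`, as a function of two real variables. -/
def Psi (i : ℕ) (lam mu : ℝ) : ℝ :=
  ∑ h ∈ Finset.range (i + 1), if (i - h) % 2 = 0 then
    (Γ.pp h).eval lam * (Γ.pp h).eval mu *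
      (Γ.kv i * Γ.b i * Γ.b (i + 1)) / (Γ.kv h * Γ.b h * Γ.b (h + 1))
  else 0

/-- The index `n` is admissible: `θ_n` is one of `θ_1, θ_d, θ_{d+1}, θ_{D-1}` if `D` is
odd (`d = (D-1)/2`), and one of `θ_1, θ_{D-1}` if `D` is even. -/
def Admissible (n : ℕ) : Prop :=
  (Odd Γ.D ∧ (n = 1 ∨ n = Γ.D / 2 ∨ n = Γ.D / 2 + 1 ∨ n = Γ.D - 1)) ∨
  (Even Γ.D ∧ (n = 1 ∨ n = Γ.D - 1))

/-- The polynomials `g_i` associated with the scalar `t`. -/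
def g (t : ℝ) (i : ℕ) : Polynomial ℝ :=
  ∑ h ∈ Finset.range (i + 1), if (i - h) % 2 = 0 then
    Polynomial.C ((Γ.pp h).eval t * (Γ.kv i * Γ.b i * Γ.b (i + 1)) /
        ((Γ.pp i).eval t * (Γ.kv h * Γ.b h * Γ.b (h + 1)))) * Γ.pp h
  else 0

/-- The dual idempotent `E_i* = E_i*(x)`. -/
def Estar (x : α) (i : ℕ) : Matrix α α ℂ :=
  Matrix.of fun y z => if y = z ∧ Γ.G.dist x y = i then 1 else 0

/-- The Hermitian inner product `⟨u,v⟩ = uᵗ v̄` on the standard module `ℂ^X`. -/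
def dotp {α : Type} [Fintype α] (u v : α → ℂ) : ℂ := ∑ y, u y * (starRingEnd ℂ) (v y)

/-- The square norm `‖v‖²` with respect to the Hermitian inner product. -/
def nrmsq {α : Type} [Fintype α] (v : α → ℂ) : ℝ := ∑ y, Complex.normSq (v y)

/-- The vector `s_2 = Σ_{∂(x,y)=2} ŷ`. -/
def s2vec (x : α) : α → ℂ := fun y => if Γ.G.dist x y = 2 then 1 else 0

/-- The scalar `ψ = b_2 (1 - b_3/(1+η))`. -/
def psi (η : ℝ) : ℝ := Γ.b 2 * (1 - Γ.b 3 / (1 + η))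

/-- The scalar `θ̃ = -1 - b_2 b_3/(t² - b_2)`. -/
def tilde (t : ℝ) : ℝ := -1 - Γ.b 2 * Γ.b 3 / (t ^ 2 - Γ.b 2)

/-- The adjacency matrix of the local graph `Γ₂² = Γ₂²(x)`, whose vertices are the
vertices at distance 2 from `x`, adjacent when at distance 2 in `Γ`. -/
def localAdj (x : α) :
    Matrix {y : α // Γ.G.dist x y = 2} {y : α // Γ.G.dist x y = 2} ℂ :=
  Matrix.of fun y z => if Γ.G.dist (y : α) (z : α) = 2 then 1 else 0

/-- `η 1, …, η k₂` enumerate the eigenvalues of the local graph `Γ₂²(x)` with their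
multiplicities, ordered so that `η 1 = p²₂₂` and `η i = b₃ - 1` for `2 ≤ i ≤ k`. -/
def IsLocalEigSeq (x : α) (η : ℕ → ℝ) : Prop :=
  η 1 = (Γ.p 2 2 2 : ℝ) ∧
  (∀ i : ℕ, 2 ≤ i → i ≤ Γ.p 0 1 1 → η i = Γ.b 3 - 1) ∧
  ∀ t : ℝ, Nat.card {i : ℕ // i ∈ Finset.Icc 1 (Γ.p 0 2 2) ∧ η i = t} =
    Module.finrank ℂ (Module.End.eigenspace (Matrix.mulVecLin (Γ.localAdj x)) (t : ℂ))

/-- The subconstituent (Terwilliger) algebra `T = T(x)`, generated by the adjacency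
matrix together with the dual idempotents `E_0*, …, E_D*`. -/
def Talg (x : α) : Subalgebra ℂ (Matrix α α ℂ) :=
  Algebra.adjoin ℂ ({Γ.Amat 1} ∪ Set.range (Γ.Estar x))

/-- A `T`-module: a `T`-invariant subspace of the standard module `ℂ^X`. -/
def IsTModule (x : α) (W : Submodule ℂ (α → ℂ)) : Prop :=
  ∀ B ∈ Γ.Talg x, ∀ w ∈ W, B.mulVec w ∈ W

/-- An irreducible `T`-module. -/
def IsIrreducibleTModule (x : α) (W : Submodule ℂ (α → ℂ)) : Prop :=
  W ≠ ⊥ ∧ Γ.IsTModule x W ∧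
    ∀ W' : Submodule ℂ (α → ℂ), W' ≤ W → Γ.IsTModule x W' → W' = ⊥ ∨ W' = W

/-- The endpoint of a `T`-module `W` is `min {i : E_i* W ≠ 0}`. -/
def HasEndpoint (x : α) (W : Submodule ℂ (α → ℂ)) (e : ℕ) : Prop :=
  (∃ w ∈ W, (Γ.Estar x e).mulVec w ≠ 0) ∧
  ∀ i : ℕ, i < e → ∀ w ∈ W, (Γ.Estar x i).mulVec w = 0

/-- A `T`-module `W` is thin whenever `dim E_i* W ≤ 1` for all `i`. -/
def IsThin (x : α) (W : Submodule ℂ (α → ℂ)) : Prop :=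
  ∀ i : ℕ, Module.finrank ℂ (W.map (Matrix.mulVecLin (Γ.Estar x i))) ≤ 1

/-- `W` has local eigenvalue `η`: every vector of `E_2* W` is an eigenvector of
`E_2* A_2 E_2*` with eigenvalue `η`. -/
def HasLocalEig (x : α) (W : Submodule ℂ (α → ℂ)) (η : ℝ) : Prop :=
  ∀ w ∈ W, (Γ.Estar x 2 * Γ.Amat 2 * Γ.Estar x 2).mulVec w =
    (η : ℂ) • ((Γ.Estar x 2).mulVec w)

/-- Membership in `U`, the orthogonal complement of `E_2* V_0 + E_2* Y` in `E_2* V`,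
where `V_0` is the (unique) irreducible `T`-module with endpoint `0` and `Y` is the
span of the irreducible `T`-modules with endpoint `1`. -/
def memU (x : α) (V0 : Submodule ℂ (α → ℂ)) (v : α → ℂ) : Prop :=
  (Γ.Estar x 2).mulVec v = v ∧
  (∀ w ∈ V0, BDRG.dotp v ((Γ.Estar x 2).mulVec w) = 0) ∧
  ∀ W : Submodule ℂ (α → ℂ), Γ.IsIrreducibleTModule x W → Γ.HasEndpoint x W 1 →
    ∀ w ∈ W, BDRG.dotp v ((Γ.Estar x 2).mulVec w) = 0

/-- Membership in `U_η = {v ∈ U : E_2* A_2 E_2* v = η v}`. -/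
def memUeta (x : α) (V0 : Submodule ℂ (α → ℂ)) (η : ℝ) (v : α → ℂ) : Prop :=
  Γ.memU x V0 v ∧ (Γ.Estar x 2 * Γ.Amat 2 * Γ.Estar x 2).mulVec v = (η : ℂ) • v

/-- The subspace `M v` of the standard module, where `M` is the Bose–Mesner algebra
(the subalgebra of `Mat_X(ℂ)` generated by the adjacency matrix). -/
def Mspan (v : α → ℂ) : Submodule ℂ (α → ℂ) :=
  Submodule.span ℂ
    {w | ∃ B ∈ Algebra.adjoin ℂ ({Γ.Amat 1} : Set (Matrix α α ℂ)), w = B.mulVec v}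

/-- Isomorphism of `T`-modules: a linear bijection `W → W'` commuting with every
element of `T`. -/
def TIso (x : α) (W W' : Submodule ℂ (α → ℂ)) : Prop :=
  ∃ σ : (α → ℂ) →ₗ[ℂ] (α → ℂ), Set.BijOn σ (W : Set (α → ℂ)) (W' : Set (α → ℂ)) ∧
    ∀ B ∈ Γ.Talg x, ∀ w ∈ W, σ (B.mulVec w) = B.mulVec (σ w)

/-- The scalar `Δ = (k-2)(c_3-1) - (c_2-1) p²₂₂`. -/
def Delta : ℝ := (Γ.k - 2) * (Γ.c 3 - 1) - (Γ.c 2 - 1) * (Γ.p 2 2 2 : ℝ)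

/-- `Γ` is taut (with respect to the eigenvalue sequence `θ`): `Δ ≠ 0` and equality
holds in MacLean's fundamental bound. -/
def IsTaut (θ : ℕ → ℝ) : Prop :=
  Γ.Delta ≠ 0 ∧
  Γ.b 3 * (Γ.b 2 * (Γ.k - 2) - (Γ.c 2 - 1) * (θ 1) ^ 2) *
      (Γ.b 2 * (Γ.k - 2) - (Γ.c 2 - 1) * (θ (Γ.D / 2)) ^ 2) =
    Γ.b 1 * Γ.Delta * ((θ 1) ^ 2 - Γ.b 2) * (Γ.b 2 - (θ (Γ.D / 2)) ^ 2)

/-- `Γ` is spectrally taut with respect to `x`: each local eigenvalue `η_i`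
with `k+1 ≤ i ≤ k₂` equals `θ̃_1` or `θ̃_d`. -/
def SpectrallyTaut (x : α) (θ : ℕ → ℝ) : Prop :=
  ∃ η : ℕ → ℝ, Γ.IsLocalEigSeq x η ∧
    ∀ i : ℕ, Γ.p 0 1 1 + 1 ≤ i → i ≤ Γ.p 0 2 2 →
      η i = Γ.tilde (θ 1) ∨ η i = Γ.tilde (θ (Γ.D / 2))

/-- `Γ` is taut with respect to `x`: every irreducible `T(x)`-module with endpoint 2
is thin with local eigenvalue `θ̃_1` or `θ̃_d`. -/
def TautWrt (x : α) (θ : ℕ → ℝ) : Prop :=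
  ∀ W : Submodule ℂ (α → ℂ), Γ.IsIrreducibleTModule x W → Γ.HasEndpoint x W 2 →
    Γ.IsThin x W ∧
      (Γ.HasLocalEig x W (Γ.tilde (θ 1)) ∨ Γ.HasLocalEig x W (Γ.tilde (θ (Γ.D / 2))))

/-! ### Auxiliary lemmas -/

section Aux

private lemma graph_step {V : Type} {G : SimpleGraph V} (hc : G.Connected) {z y : V}
    (h : G.dist z y ≠ 0) : ∃ z', G.Adj z z' ∧ G.dist z' y = G.dist z y - 1 := by
  obtain ⟨q, hq⟩ := (hc z y).exists_walk_length_eq_dist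
  cases q with
  | nil => exact absurd SimpleGraph.dist_self h
  | @cons _ w _ hadj q =>
    refine ⟨w, hadj, ?_⟩
    have h1 : G.dist w y ≤ q.length := SimpleGraph.dist_le q
    have h3 : G.dist z w = 1 := SimpleGraph.dist_eq_one_iff_adj.2 hadj
    have h2 : G.dist z y ≤ G.dist z w + G.dist w y := hc.dist_triangle
    simp only [SimpleGraph.Walk.length_cons] at hq
    omega

private lemma graph_mid {V : Type} {G : SimpleGraph V} (hc : G.Connected) :
    ∀ (j : ℕ) (x y : V), j ≤ G.dist x y →
      ∃ z, G.dist x z = j ∧ G.dist z y = G.dist x y - j := by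
  intro j
  induction j with
  | zero => exact fun x y _ => ⟨x, by simp, by simp⟩
  | succ j ih =>
    intro x y hj
    obtain ⟨z, hz1, hz2⟩ := ih x y (by omega)
    have hne : G.dist z y ≠ 0 := by omega
    obtain ⟨z', ha, hz'⟩ := graph_step hc hne
    have d1 : G.dist z z' = 1 := SimpleGraph.dist_eq_one_iff_adj.2 ha
    have up : G.dist x z' ≤ G.dist x z + G.dist z z' := hc.dist_triangle
    have lo : G.dist x y ≤ G.dist x z' + G.dist z' y := hc.dist_triangle
    exact ⟨z', by omega, by omega⟩

lemma exists_pair (j : ℕ) (hj : j ≤ Γ.D) : ∃ y z : α, Γ.G.dist y z = j := by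
  obtain ⟨x, y, hxy⟩ := Γ.hdiam
  obtain ⟨z, hz, -⟩ := graph_mid Γ.hconn j x y (by omega)
  exact ⟨x, z, hz⟩

lemma nonempty_alpha {α : Type} [Fintype α] [DecidableEq α] (G : BDRG α) :
    Nonempty α := by
  obtain ⟨x, y, -⟩ := G.hdiam
  exact ⟨x⟩

lemma count_eq (y z : α) (j i : ℕ) (hj : j ≤ Γ.D) (hi : i ≤ Γ.D)
    (hyz : Γ.G.dist y z = j) :
    ((Finset.univ.filter fun w => Γ.G.dist y w = 1 ∧ Γ.G.dist w z = i).card) =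
      Γ.p j 1 i := by
  classical
  have hD := Γ.hD
  rw [← Γ.hp j 1 i hj (by omega) hi y z hyz, Nat.card_eq_fintype_card,
    Fintype.card_subtype]

lemma c_zero : Γ.c 0 = 0 := by simp [BDRG.c]

lemma b_top : Γ.b Γ.D = 0 := by simp [BDRG.b]

lemma k_eq : Γ.k = Γ.b 0 := rfl

lemma sum_nbhd (y z : α) (j : ℕ) (hj : j ≤ Γ.D) (hyz : Γ.G.dist y z = j)
    (g : ℕ → ℂ) :
    ∑ w : α, (if Γ.G.dist y w = 1 then (1 : ℂ) else 0) * g (Γ.G.dist w z)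
      = ((Γ.c j : ℝ) : ℂ) * g (j - 1) + ((Γ.b j : ℝ) : ℂ) * g (j + 1) := by
  classical
  have hD := Γ.hD
  have step1 : ∑ w : α, (if Γ.G.dist y w = 1 then (1 : ℂ) else 0) * g (Γ.G.dist w z)
      = ∑ w ∈ Finset.univ.filter (fun w => Γ.G.dist y w = 1), g (Γ.G.dist w z) := by
    rw [Finset.sum_filter]
    exact Finset.sum_congr rfl fun w _ => by split <;> simp
  have step2 : ∑ w ∈ Finset.univ.filter (fun w => Γ.G.dist y w = 1), g (Γ.G.dist w z)
      = ∑ i ∈ Finset.range (Γ.D + 1),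
          ((Finset.univ.filter fun w => Γ.G.dist y w = 1 ∧ Γ.G.dist w z = i).card : ℂ)
            * g i := by
    rw [← Finset.sum_fiberwise_of_maps_to'
      (g := fun w => Γ.G.dist w z) (t := Finset.range (Γ.D + 1))
      (fun w _ => Finset.mem_range.2 (by simpa using Nat.lt_succ_of_le (Γ.hdist w z))) g]
    refine Finset.sum_congr rfl fun i _ => ?_
    rw [Finset.filter_filter, Finset.sum_const, nsmul_eq_mul]
  rw [step1, step2]
  have key : ∀ i ∈ Finset.range (Γ.D + 1),
      ((Finset.univ.filter fun w => Γ.G.dist y w = 1 ∧ Γ.G.dist w z = i).card : ℂ) * g i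
      = (if i = j - 1 then ((Γ.c j : ℝ) : ℂ) * g i else 0)
        + (if i = j + 1 then ((Γ.b j : ℝ) : ℂ) * g i else 0) := by
    intro i hi
    rw [Finset.mem_range] at hi
    have hiD : i ≤ Γ.D := by omega
    have hcard := Γ.count_eq y z j i hj hiD hyz
    by_cases h1 : i = j - 1
    · by_cases hj0 : j = 0
      · -- then i = 0 = j; count is p 0 1 0 = 0 by parity; and c 0 = 0
        subst hj0
        have : i = 0 := by omega
        subst this
        have hz0 : Γ.p 0 1 0 = 0 := Γ.hbip 0 1 0 (by omega) (by omega) (by omega)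
          (by decide)
        rw [if_pos rfl, if_neg (by omega), hcard, hz0, Γ.c_zero]
        push_cast
        ring
      · -- i = j - 1 with j ≥ 1 : count = c j
        have hij : i ≠ j + 1 := by omega
        rw [if_pos h1, if_neg hij, hcard, BDRG.c, if_neg hj0]
        subst h1; push_cast; ring
    · by_cases h2 : i = j + 1
      · -- count = b j ; note j ≠ D since i ≤ D
        have hjD : j ≠ Γ.D := by omega
        rw [if_neg h1, if_pos h2, hcard, BDRG.b, if_neg hjD]
        subst h2; push_cast; ring
      · -- |i - j| ≥ 2 or i = j : count = 0
        rw [if_neg h1, if_neg h2]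
        by_cases h3 : i = j
        · have hj0 : j ≠ 0 := by omega
          have hodd : Odd (j + 1 + i) := ⟨j, by omega⟩
          have := Γ.hbip j 1 i hj (by omega) hiD hodd
          rw [hcard, this]; push_cast; ring
        · have hemp : (Finset.univ.filter fun w =>
              Γ.G.dist y w = 1 ∧ Γ.G.dist w z = i) = ∅ := by
            refine Finset.filter_eq_empty_iff.2 fun w _ => ?_
            rintro ⟨hw1, hw2⟩
            have t1 : Γ.G.dist w z ≤ Γ.G.dist w y + Γ.G.dist y z :=
              Γ.hconn.dist_triangle
            have t2 : Γ.G.dist y z ≤ Γ.G.dist y w + Γ.G.dist w z :=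
              Γ.hconn.dist_triangle
            have hc : Γ.G.dist w y = Γ.G.dist y w := SimpleGraph.dist_comm ..
            omega
          rw [hemp]; simp
  rw [Finset.sum_congr rfl key, Finset.sum_add_distrib,
    Finset.sum_ite_eq' (Finset.range (Γ.D + 1)) (j - 1)
      (fun i => ((Γ.c j : ℝ) : ℂ) * g i),
    Finset.sum_ite_eq' (Finset.range (Γ.D + 1)) (j + 1)
      (fun i => ((Γ.b j : ℝ) : ℂ) * g i)]
  rw [if_pos (Finset.mem_range.2 (by omega))]
  by_cases hjD : j = Γ.D
  · rw [if_neg (by simp [hjD]), hjD, Γ.b_top]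
    simp
  · rw [if_pos (Finset.mem_range.2 (by omega))]

lemma bc_sum (j : ℕ) (hj : j ≤ Γ.D) : Γ.c j + Γ.b j = Γ.k := by
  have hD := Γ.hD
  obtain ⟨y, z, hyz⟩ := Γ.exists_pair j hj
  have h1 := Γ.sum_nbhd y z j hj hyz (fun _ => 1)
  have h2 := Γ.sum_nbhd y y 0 (by omega) (by simp) (fun _ => 1)
  rw [Γ.c_zero] at h2
  simp only [mul_one] at h1 h2
  rw [h2] at h1
  norm_num at h1
  have h3 : ((Γ.c j + Γ.b j : ℝ) : ℂ) = ((Γ.b 0 : ℝ) : ℂ) := by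
    push_cast
    linear_combination -h1
  rw [Γ.k_eq]
  exact_mod_cast h3

lemma c_one : Γ.c 1 = 1 := by
  have hD := Γ.hD
  obtain ⟨y, z, hyz⟩ := Γ.exists_pair 1 (by omega)
  have hcard := Γ.count_eq y z 1 0 (by omega) (by omega) hyz
  have hset : (Finset.univ.filter fun w => Γ.G.dist y w = 1 ∧ Γ.G.dist w z = 0)
      = {z} := by
    ext w
    simp only [Finset.mem_filter, Finset.mem_univ, true_and, Finset.mem_singleton]
    constructor
    · rintro ⟨-, hw2⟩
      exact (Γ.hconn.dist_eq_zero_iff).1 hw2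
    · rintro rfl
      exact ⟨hyz, by simp⟩
  rw [hset, Finset.card_singleton] at hcard
  rw [BDRG.c, if_neg (by omega), ← hcard]
  norm_num

lemma c_pos (j : ℕ) (h1 : 1 ≤ j) (hj : j ≤ Γ.D) : 0 < Γ.c j := by
  have hD := Γ.hD
  obtain ⟨x, y, hxy⟩ := Γ.exists_pair j hj
  obtain ⟨w, hw1, hw2⟩ := graph_mid Γ.hconn 1 x y (by omega)
  have hcard := Γ.count_eq x y j (j - 1) hj (by omega) hxy
  have hmem : w ∈ Finset.univ.filter
      (fun w => Γ.G.dist x w = 1 ∧ Γ.G.dist w y = j - 1) := by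
    simp only [Finset.mem_filter, Finset.mem_univ, true_and]
    exact ⟨hw1, by omega⟩
  have hpos : 0 < Γ.p j 1 (j - 1) := by
    rw [← hcard]
    exact Finset.card_pos.2 ⟨w, hmem⟩
  rw [BDRG.c, if_neg (by omega)]
  exact_mod_cast hpos

lemma b_pos (j : ℕ) (hj : j ≤ Γ.D - 1) : 0 < Γ.b j := by
  have hD := Γ.hD
  obtain ⟨u, v, huv⟩ := Γ.exists_pair (j + 1) (by omega)
  obtain ⟨w, hw1, hw2⟩ := graph_mid Γ.hconn 1 u v (by omega)
  have hwv : Γ.G.dist w v = j := by omega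
  have hcard := Γ.count_eq w v j (j + 1) (by omega) (by omega) hwv
  have hmem : u ∈ Finset.univ.filter
      (fun t => Γ.G.dist w t = 1 ∧ Γ.G.dist t v = j + 1) := by
    simp only [Finset.mem_filter, Finset.mem_univ, true_and]
    exact ⟨by rw [SimpleGraph.dist_comm]; exact hw1, huv⟩
  have hpos : 0 < Γ.p j 1 (j + 1) := by
    rw [← hcard]
    exact Finset.card_pos.2 ⟨u, hmem⟩
  rw [BDRG.b, if_neg (by omega)]
  exact_mod_cast hpos

lemma k_ge_three : (3 : ℝ) ≤ Γ.k := by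
  have hD := Γ.hD
  rw [Γ.k_eq, BDRG.b, if_neg (by omega)]
  exact_mod_cast Γ.hk

lemma nbhd_card (y : α) :
    (((Finset.univ.filter fun w => Γ.G.dist y w = 1).card : ℝ)) = Γ.k := by
  have hD := Γ.hD
  have hcard := Γ.count_eq y y 0 1 (by omega) (by omega) (by simp)
  have hset : (Finset.univ.filter fun w => Γ.G.dist y w = 1 ∧ Γ.G.dist w y = 1)
      = (Finset.univ.filter fun w => Γ.G.dist y w = 1) := by
    refine Finset.filter_congr fun w _ => ?_
    rw [SimpleGraph.dist_comm (u := w)]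
    tauto
  rw [hset] at hcard
  rw [hcard, Γ.k_eq, BDRG.b, if_neg (by omega)]

/-- Gershgorin-type bound: every eigenvalue of the adjacency matrix has `|μ| ≤ k`. -/
lemma eig_bound (μ : ℝ)
    (hμ : Module.End.HasEigenvalue (Matrix.mulVecLin (Γ.Amat 1)) ((μ : ℂ))) :
    |μ| ≤ Γ.k := by
  obtain ⟨v, hv⟩ := hμ.exists_hasEigenvector
  have hva : (Γ.Amat 1).mulVec v = (μ : ℂ) • v := hv.apply_eq_smul
  have hv0 : v ≠ 0 := hv.right
  have : Nonempty α := Γ.nonempty_alpha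
  obtain ⟨y, -, hy⟩ := Finset.exists_max_image Finset.univ (fun w => ‖v w‖)
    Finset.univ_nonempty
  have hvy : 0 < ‖v y‖ := by
    obtain ⟨w, hw⟩ := Function.ne_iff.1 hv0
    have h1 : 0 < ‖v w‖ := by simpa [norm_pos_iff] using hw
    exact lt_of_lt_of_le h1 (hy w (Finset.mem_univ w))
  have hrow := congrFun hva y
  have hval : ‖((μ : ℂ) • v) y‖ = |μ| * ‖v y‖ := by
    simp [norm_smul]
  have hsum : ‖(Γ.Amat 1).mulVec v y‖ ≤ Γ.k * ‖v y‖ := by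
    have h1 : (Γ.Amat 1).mulVec v y
        = ∑ w : α, (if Γ.G.dist y w = 1 then (1 : ℂ) else 0) * v w := by
      simp [Matrix.mulVec, dotProduct, BDRG.Amat]
    rw [h1]
    calc ‖∑ w : α, (if Γ.G.dist y w = 1 then (1 : ℂ) else 0) * v w‖
        ≤ ∑ w : α, ‖(if Γ.G.dist y w = 1 then (1 : ℂ) else 0) * v w‖ :=
          norm_sum_le _ _
      _ ≤ ∑ w : α, (if Γ.G.dist y w = 1 then (1 : ℝ) else 0) * ‖v y‖ := by
          refine Finset.sum_le_sum fun w _ => ?_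
          by_cases h : Γ.G.dist y w = 1
          · simpa [h] using hy w (Finset.mem_univ w)
          · simp [h]
      _ = Γ.k * ‖v y‖ := by
          simp only [ite_mul, one_mul, zero_mul]
          rw [← Finset.sum_filter, Finset.sum_const, nsmul_eq_mul, ← Γ.nbhd_card y]
  rw [hrow, hval] at hsum
  exact le_of_mul_le_mul_right (by linarith) hvy

lemma Eentry (E : Matrix α α ℂ) (θs : ℕ → ℝ) (hθs : Γ.IsDualEigSeq E θs) (y z : α) :
    E y z = (Fintype.card α : ℂ)⁻¹ * ((θs (Γ.G.dist y z) : ℝ) : ℂ) := by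
  rw [hθs]
  simp only [Matrix.smul_apply, Matrix.sum_apply, smul_eq_mul, BDRG.Amat,
    Matrix.of_apply, mul_ite, mul_one, mul_zero]
  congr 1
  have hd : Γ.G.dist y z ∈ Finset.range (Γ.D + 1) :=
    Finset.mem_range.2 (Nat.lt_succ_of_le (Γ.hdist y z))
  rw [Finset.sum_congr rfl (fun i _ => by
    rw [show (if Γ.G.dist y z = i then ((θs i : ℝ) : ℂ) else 0)
      = (if i = Γ.G.dist y z then ((θs i : ℝ) : ℂ) else 0) from by
        by_cases h : Γ.G.dist y z = i
        · rw [if_pos h, if_pos h.symm]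
        · rw [if_neg h, if_neg (Ne.symm h)]]),
    Finset.sum_ite_eq' (Finset.range (Γ.D + 1)) (Γ.G.dist y z)
      (fun i => ((θs i : ℝ) : ℂ)), if_pos hd]

lemma dual_rec (t : ℝ) (E : Matrix α α ℂ) (hE : Γ.IsPrimitiveIdempotent t E)
    (θs : ℕ → ℝ) (hθs : Γ.IsDualEigSeq E θs) (j : ℕ) (hj : j ≤ Γ.D) :
    t * θs j = Γ.c j * θs (j - 1) + Γ.b j * θs (j + 1) := by
  obtain ⟨herm, hidem, hvec⟩ := hE
  obtain ⟨y, z, hyz⟩ := Γ.exists_pair j hj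
  have hN : (Fintype.card α : ℂ) ≠ 0 := by
    have : Nonempty α := Γ.nonempty_alpha
    exact_mod_cast Nat.cast_ne_zero.2 Fintype.card_ne_zero
  set col : α → ℂ := fun w => E w z with hcol
  have hEcol : E.mulVec col = col := by
    funext w
    simp only [Matrix.mulVec, dotProduct, hcol]
    rw [← Matrix.mul_apply, hidem]
  have hAcol := (hvec col).2 hEcol
  have hrow := congrFun hAcol y
  have hcv : ∀ w, col w = (Fintype.card α : ℂ)⁻¹ * ((θs (Γ.G.dist w z) : ℝ) : ℂ) :=
    fun w => Γ.Eentry E θs hθs w z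
  have hleft : (Γ.Amat 1).mulVec col y
      = (Fintype.card α : ℂ)⁻¹ * (((Γ.c j : ℝ) : ℂ) * ((θs (j - 1) : ℝ) : ℂ)
        + ((Γ.b j : ℝ) : ℂ) * ((θs (j + 1) : ℝ) : ℂ)) := by
    have h1 : (Γ.Amat 1).mulVec col y
        = ∑ w : α, (if Γ.G.dist y w = 1 then (1 : ℂ) else 0) * col w := by
      simp [Matrix.mulVec, dotProduct, BDRG.Amat]
    rw [h1]
    calc ∑ w : α, (if Γ.G.dist y w = 1 then (1 : ℂ) else 0) * col w
        = ∑ w : α, (Fintype.card α : ℂ)⁻¹ *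
            ((if Γ.G.dist y w = 1 then (1 : ℂ) else 0)
              * ((θs (Γ.G.dist w z) : ℝ) : ℂ)) := by
          refine Finset.sum_congr rfl fun w _ => ?_
          rw [hcv w]; ring
      _ = _ := by
          rw [← Finset.mul_sum,
            Γ.sum_nbhd y z j hj hyz (fun i => ((θs i : ℝ) : ℂ))]
  have hright : ((t : ℂ) • col) y = (t : ℂ) *
      ((Fintype.card α : ℂ)⁻¹ * ((θs j : ℝ) : ℂ)) := by
    have := hcv y
    simp only [Pi.smul_apply, smul_eq_mul]
    rw [this, hyz]
  rw [hleft, hright] at hrow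
  have hC : ((Γ.c j : ℝ) : ℂ) * ((θs (j - 1) : ℝ) : ℂ)
      + ((Γ.b j : ℝ) : ℂ) * ((θs (j + 1) : ℝ) : ℂ)
      = ((t : ℝ) : ℂ) * ((θs j : ℝ) : ℂ) := by
    have h2 := congrArg (fun x => (Fintype.card α : ℂ) * x) hrow
    field_simp at h2
    linear_combination h2
  have : ((Γ.c j * θs (j - 1) + Γ.b j * θs (j + 1) : ℝ) : ℂ)
      = ((t * θs j : ℝ) : ℂ) := by push_cast; linear_combination hC
  exact (Complex.ofReal_inj.1 this).symm

lemma theta0_ne (t : ℝ) (E : Matrix α α ℂ) (hE : Γ.IsPrimitiveIdempotent t E)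
    (θs : ℕ → ℝ) (hθs : Γ.IsDualEigSeq E θs)
    (ht : Module.End.HasEigenvalue (Matrix.mulVecLin (Γ.Amat 1)) ((t : ℂ))) :
    θs 0 ≠ 0 := by
  intro h0
  obtain ⟨herm, hidem, hvec⟩ := hE
  obtain ⟨v, hv⟩ := ht.exists_hasEigenvector
  have hva : (Γ.Amat 1).mulVec v = (t : ℂ) • v := hv.apply_eq_smul
  have hEv : E.mulVec v = v := (hvec v).1 hva
  have hrowzero : ∀ y w : α, E y w = 0 := by
    intro y w
    have hdiag : E y y = 0 := by
      rw [Γ.Eentry E θs hθs y y, SimpleGraph.dist_self, h0]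
      simp
    have hsq : E y y = ∑ u, (Complex.normSq (E y u) : ℂ) := by
      conv_lhs => rw [← hidem]
      rw [Matrix.mul_apply]
      refine Finset.sum_congr rfl fun u _ => ?_
      have h : E u y = (starRingEnd ℂ) (E y u) := by
        conv_lhs => rw [← herm]
        simp [Matrix.conjTranspose_apply]
      rw [h, Complex.mul_conj]
    have hsum0 : ∑ u, Complex.normSq (E y u) = (0 : ℝ) := by
      have : ((∑ u, Complex.normSq (E y u) : ℝ) : ℂ) = 0 := by
        push_cast
        rw [← hsq, hdiag]
      exact_mod_cast this
    have := (Finset.sum_eq_zero_iff_of_nonneg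
      (fun u _ => Complex.normSq_nonneg _)).1 hsum0 w (Finset.mem_univ w)
    exact Complex.normSq_eq_zero.1 this
  have hv0 : v = 0 := by
    funext y
    rw [← congrFun hEv y]
    simp [Matrix.mulVec, dotProduct, hrowzero]
  exact hv.right hv0

/-! ### Polynomial identities -/

lemma pp_zero : Γ.pp 0 = 1 := by
  simp [BDRG.pp, BDRG.f]

lemma pp_one : Γ.pp 1 = Polynomial.X := by
  rw [BDRG.pp, Finset.sum_range_succ, Finset.sum_range_one]
  norm_num [BDRG.f]

lemma pp_add_two (i : ℕ) : Γ.pp (i + 2) = Γ.pp i + Γ.f (i + 2) := by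
  have h1 : Γ.pp (i + 2) = (∑ h ∈ Finset.range (i + 2),
      if (i + 2 - h) % 2 = 0 then Γ.f h else 0) + Γ.f (i + 2) := by
    rw [BDRG.pp, Finset.sum_range_succ, if_pos (by omega)]
  have h2 : (∑ h ∈ Finset.range (i + 2), if (i + 2 - h) % 2 = 0 then Γ.f h else 0)
      = ∑ h ∈ Finset.range (i + 1), if (i + 2 - h) % 2 = 0 then Γ.f h else 0 := by
    rw [Finset.sum_range_succ, if_neg (by omega), add_zero]
  have h3 : (∑ h ∈ Finset.range (i + 1), if (i + 2 - h) % 2 = 0 then Γ.f h else 0)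
      = Γ.pp i := by
    rw [BDRG.pp]
    refine Finset.sum_congr rfl fun h hh => ?_
    have hh' : h ≤ i := by have := Finset.mem_range.1 hh; omega
    have he : i + 2 - h = (i - h) + 2 := by omega
    rw [he, Nat.add_mod_right]
  rw [h1, h2, h3]

lemma f_rec (t : ℝ) (i : ℕ) (hc : Γ.c (i + 2) ≠ 0) :
    Γ.c (i + 2) * (Γ.f (i + 2)).eval t
      = t * (Γ.f (i + 1)).eval t - Γ.b i * (Γ.f i).eval t := by
  have h : Γ.f (i + 2) = Polynomial.C (Γ.c (i + 2))⁻¹ *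
      (Polynomial.X * Γ.f (i + 1) - Polynomial.C (Γ.b i) * Γ.f i) := by
    conv_lhs => rw [BDRG.f]
  rw [h]
  simp only [Polynomial.eval_mul, Polynomial.eval_sub, Polynomial.eval_C,
    Polynomial.eval_X]
  field_simp

lemma Qrec (t : ℝ) : ∀ i, 1 ≤ i → i + 1 ≤ Γ.D →
    t * (Γ.pp i).eval t
      = Γ.c (i + 1) * (Γ.pp (i + 1)).eval t
        + Γ.b (i + 1) * (Γ.pp (i - 1)).eval t := by
  have hD := Γ.hD
  have hbc := Γ.bc_sum
  have hc1 := Γ.c_one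
  intro i
  induction i using Nat.strong_induction_on with
  | _ i ih =>
    match i, ih with
    | 1, _ =>
      intro _ _
      have e0 : (Γ.pp 0).eval t = 1 := by rw [Γ.pp_zero]; simp
      have e1 : (Γ.pp 1).eval t = t := by rw [Γ.pp_one]; simp
      have e2 : (Γ.pp 2).eval t = (Γ.pp 0).eval t + (Γ.f 2).eval t := by
        rw [Γ.pp_add_two 0]; simp
      have hf2 := Γ.f_rec t 0 (ne_of_gt (Γ.c_pos 2 (by omega) (by omega)))
      norm_num at hf2
      have hf1 : (Γ.f 1).eval t = t := by simp [BDRG.f]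
      have hf0 : (Γ.f 0).eval t = 1 := by simp [BDRG.f]
      have hk2 := hbc 2 (by omega)
      rw [Γ.k_eq] at hk2
      rw [hf1, hf0] at hf2
      show t * (Γ.pp 1).eval t
        = Γ.c 2 * (Γ.pp 2).eval t + Γ.b 2 * (Γ.pp 0).eval t
      rw [e1, e2, e0]
      linear_combination -hf2 - hk2
    | 2, _ =>
      intro _ _
      have e1 : (Γ.pp 1).eval t = t := by rw [Γ.pp_one]; simp
      have e2 : (Γ.pp 2).eval t = (Γ.pp 0).eval t + (Γ.f 2).eval t := by
        rw [Γ.pp_add_two 0]; simp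
      have e0 : (Γ.pp 0).eval t = 1 := by rw [Γ.pp_zero]; simp
      have e3 : (Γ.pp 3).eval t = (Γ.pp 1).eval t + (Γ.f 3).eval t := by
        rw [Γ.pp_add_two 1]; simp
      have hf3 := Γ.f_rec t 1 (ne_of_gt (Γ.c_pos 3 (by omega) (by omega)))
      norm_num at hf3
      have hf1 : (Γ.f 1).eval t = t := by simp [BDRG.f]
      have hk1 := hbc 1 (by omega)
      have hk3 := hbc 3 (by omega)
      rw [hf1] at hf3
      show t * (Γ.pp 2).eval t
        = Γ.c 3 * (Γ.pp 3).eval t + Γ.b 3 * (Γ.pp 1).eval t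
      rw [e2, e0, e3, e1]
      linear_combination -hf3 + t * hk1 - t * hk3 - t * hc1
    | 0, _ => exact fun h _ => absurd h (by omega)
    | (m + 3), ih =>
      intro _ hup
      have hB := ih (m + 1) (by omega) (by omega) (by omega)
      simp only [show m + 1 + 1 = m + 2 from by omega,
        show m + 1 - 1 = m from by omega] at hB
      have eA : (Γ.pp (m + 3)).eval t
          = (Γ.pp (m + 1)).eval t + (Γ.f (m + 3)).eval t := by
        rw [Γ.pp_add_two (m + 1)]; simp
      have hC := Γ.f_rec t (m + 2)
        (ne_of_gt (Γ.c_pos (m + 4) (by omega) (by omega)))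
      simp only [show m + 2 + 2 = m + 4 from by omega,
        show m + 2 + 1 = m + 3 from by omega] at hC
      have eD : (Γ.pp (m + 2)).eval t
          = (Γ.pp m).eval t + (Γ.f (m + 2)).eval t := by
        rw [Γ.pp_add_two m]; simp
      have eE : (Γ.pp (m + 4)).eval t
          = (Γ.pp (m + 2)).eval t + (Γ.f (m + 4)).eval t := by
        rw [Γ.pp_add_two (m + 2)]; simp
      have hK2 := hbc (m + 2) (by omega)
      have hK4 := hbc (m + 4) (by omega)
      show t * (Γ.pp (m + 3)).eval t
        = Γ.c (m + 4) * (Γ.pp (m + 4)).eval t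
          + Γ.b (m + 4) * (Γ.pp (m + 2)).eval t
      linear_combination t * eA - Γ.c (m + 4) * eE + hB - hC
        - Γ.b (m + 2) * eD + (Γ.pp (m + 2)).eval t * (hK2 - hK4)

lemma main_calc (t : ℝ) (σ : ℕ → ℝ)
    (hσ : ∀ j ≤ Γ.D, t * σ j = Γ.c j * σ (j - 1) + Γ.b j * σ (j + 1)) :
    ∀ i ≤ Γ.D - 2,
      (Γ.pp i).eval t * (σ 0 - σ 2) * (∏ j ∈ Finset.Icc 1 i, Γ.c j)
        = (σ i - σ (i + 2)) * (∏ j ∈ Finset.Icc 2 (i + 1), Γ.b j) := by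
  have hD := Γ.hD
  have hbc := Γ.bc_sum
  have hc1 := Γ.c_one
  intro i
  induction i using Nat.strong_induction_on with
  | _ i ih =>
    match i, ih with
    | 0, _ =>
      intro _
      rw [Γ.pp_zero, Finset.Icc_eq_empty (by omega), Finset.Icc_eq_empty (by omega)]
      simp
    | 1, _ =>
      intro _
      have e1 : (Γ.pp 1).eval t = t := by rw [Γ.pp_one]; simp
      have h0 := hσ 0 (by omega)
      have h2 := hσ 2 (by omega)
      have hk2 := hbc 2 (by omega)
      rw [Γ.c_zero] at h0
      rw [Γ.k_eq] at hk2
      norm_num at h0 h2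
      rw [e1, show Finset.Icc 1 1 = {1} from rfl, show Finset.Icc 2 2 = {2} from rfl,
        Finset.prod_singleton, Finset.prod_singleton, hc1]
      linear_combination h0 - h2 - σ 1 * hk2
    | (m + 2), ih =>
      intro hi
      have IH1 := ih (m + 1) (by omega) (by omega)
      have IH0 := ih m (by omega) (by omega)
      have hQ := Γ.Qrec t (m + 1) (by omega) (by omega)
      simp only [show m + 1 + 1 = m + 2 from by omega,
        show m + 1 - 1 = m from by omega] at hQ
      have hσ1 := hσ (m + 1) (by omega)
      have hσ3 := hσ (m + 3) (by omega)
      simp only [show m + 1 + 1 = m + 2 from by omega,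
        show m + 1 - 1 = m from by omega] at hσ1
      simp only [show m + 3 + 1 = m + 4 from by omega,
        show m + 3 - 1 = m + 2 from by omega] at hσ3
      have hK1 := hbc (m + 1) (by omega)
      have hK3 := hbc (m + 3) (by omega)
      have hR : t * (σ (m + 1) - σ (m + 3))
          = Γ.c (m + 1) * (σ m - σ (m + 2))
            + Γ.b (m + 3) * (σ (m + 2) - σ (m + 4)) := by
        linear_combination hσ1 - hσ3 + σ (m + 2) * hK1 - σ (m + 2) * hK3
      have prodc2 : (∏ j ∈ Finset.Icc 1 (m + 2), Γ.c j)
          = (∏ j ∈ Finset.Icc 1 (m + 1), Γ.c j) * Γ.c (m + 2) :=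
        Finset.prod_Icc_succ_top (by omega) _
      have prodc1 : (∏ j ∈ Finset.Icc 1 (m + 1), Γ.c j)
          = (∏ j ∈ Finset.Icc 1 m, Γ.c j) * Γ.c (m + 1) :=
        Finset.prod_Icc_succ_top (by omega) _
      have prodb2 : (∏ j ∈ Finset.Icc 2 (m + 3), Γ.b j)
          = (∏ j ∈ Finset.Icc 2 (m + 2), Γ.b j) * Γ.b (m + 3) :=
        Finset.prod_Icc_succ_top (by omega) _
      have prodb1 : (∏ j ∈ Finset.Icc 2 (m + 2), Γ.b j)
          = (∏ j ∈ Finset.Icc 2 (m + 1), Γ.b j) * Γ.b (m + 2) :=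
        Finset.prod_Icc_succ_top (by omega) _
      rw [prodb1, prodc1] at IH1
      show (Γ.pp (m + 2)).eval t * (σ 0 - σ 2) * (∏ j ∈ Finset.Icc 1 (m + 2), Γ.c j)
        = (σ (m + 2) - σ (m + 4)) * (∏ j ∈ Finset.Icc 2 (m + 3), Γ.b j)
      rw [prodc2, prodc1, prodb2, prodb1]
      linear_combination
        (-(σ 0 - σ 2) * (∏ j ∈ Finset.Icc 1 m, Γ.c j) * Γ.c (m + 1)) * hQ
        + t * IH1 - Γ.b (m + 2) * Γ.c (m + 1) * IH0
        + (∏ j ∈ Finset.Icc 2 (m + 1), Γ.b j) * Γ.b (m + 2) * hR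

end Aux

end BDRG

/-- the values `p_i(θ)` in terms of the dual eigenvalues. -/
theorem statement_2 {α : Type} [Fintype α] [DecidableEq α] (Γ : BDRG α)
    (θ : ℕ → ℝ) (hθ : Γ.IsEigenvalueSeq θ)
    (n : ℕ) (hn1 : 1 ≤ n) (hn2 : n ≤ Γ.D - 1)
    (E : Matrix α α ℂ) (hE : Γ.IsPrimitiveIdempotent (θ n) E)
    (θs : ℕ → ℝ) (hθs : Γ.IsDualEigSeq E θs) :
    θs 0 ≠ θs 2 ∧
    ∀ i : ℕ, i ≤ Γ.D - 2 →
      (Γ.pp i).eval (θ n) =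
        (∏ j ∈ Finset.Icc 2 (i + 1), Γ.b j) / (∏ j ∈ Finset.Icc 1 i, Γ.c j) *
          ((θs i - θs (i + 2)) / (θs 0 - θs 2)) := by
  classical
  have hD := Γ.hD
  obtain ⟨hθ0, hmono, heig, -⟩ := hθ
  set t := θ n with ht
  have hnD : n ≤ Γ.D := by omega
  have htk : t < Γ.k := by rw [← hθ0]; exact hmono 0 n (by omega) hnD
  have hDbound : |θ Γ.D| ≤ Γ.k := Γ.eig_bound (θ Γ.D) (heig Γ.D le_rfl)
  have htk2 : -Γ.k < t := by
    have h1 : θ Γ.D < t := hmono n Γ.D (by omega) le_rfl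
    have h2 := abs_le.1 hDbound
    linarith [h2.1]
  have hsq : t ^ 2 < Γ.k ^ 2 := sq_lt_sq' htk2 htk
  have hσ : ∀ j ≤ Γ.D, t * θs j = Γ.c j * θs (j - 1) + Γ.b j * θs (j + 1) :=
    fun j hj => Γ.dual_rec t E hE θs hθs j hj
  have hσ0 : θs 0 ≠ 0 := Γ.theta0_ne t E hE θs hθs (heig n hnD)
  have hk3 := Γ.k_ge_three
  have hb1 := Γ.b_pos 1 (by omega)
  have key : Γ.k * Γ.b 1 * (θs 0 - θs 2) = θs 0 * (Γ.k ^ 2 - t ^ 2) := by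
    have h0 := hσ 0 (by omega)
    have h1 := hσ 1 (by omega)
    have hk1 := Γ.bc_sum 1 (by omega)
    rw [Γ.c_zero] at h0
    rw [Γ.c_one] at h1
    rw [Γ.k_eq] at hk1 ⊢
    norm_num at h0 h1
    have hc1 := Γ.c_one
    linear_combination t * h0 + Γ.b 0 * h1 + θs 0 * Γ.b 0 * hk1
      - θs 0 * Γ.b 0 * hc1
  have hne : θs 0 - θs 2 ≠ 0 := by
    intro h
    rw [h, mul_zero] at key
    have h2 : Γ.k ^ 2 - t ^ 2 ≠ 0 := by nlinarith
    exact h2 (by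
      rcases mul_eq_zero.1 key.symm with h3 | h3
      · exact absurd h3 hσ0
      · exact h3)
  refine ⟨fun h => hne (by rw [h]; ring), fun i hi => ?_⟩
  have M := Γ.main_calc t θs hσ i hi
  have hcprod : (∏ j ∈ Finset.Icc 1 i, Γ.c j) ≠ 0 :=
    Finset.prod_ne_zero_iff.2 fun j hj => by
      rw [Finset.mem_Icc] at hj
      exact ne_of_gt (Γ.c_pos j hj.1 (by omega))
  rw [div_mul_div_comm, eq_div_iff (mul_ne_zero hcprod hne)]
  linear_combination M
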